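/- Let S be a schedule, t_j ∈ trans(S) a running transaction with c_j, a_j ∉ S, S recoverable, and ≪' any version order for S such that RC-Rule holds (every version x_i ∈ rs_j has c_i ∈ S). Then in MVSG(S ∪ {c_j}, ≪') there is no edge of the form t_j →(wr) t_k; consequently, every nonempty directed path starting at t_j begins with an edge t_j → t_k where t_k ∈ overwriters_j or t_k ∈ successors_j, so every transaction in RN(t_j) is reached by a path whose first edge goes into overwriters_j ∪ successors_j. (Theorem 2, Reachable transactions.) -/

import Mathlib

/-!
A formalization of multiversion schedules, the multiversion serialization
graph (MVSG), strict serializability, recoverability, and the Non-visible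
Write Rule (NWR), following "NWR: Rethinking Thomas Write Rule for
Omittable Write Operations".

A version of a data item `x` is identified by the transaction that wrote it:
`w_i(x_i)` is recorded as `Op.write t_i x`, and the version `x_i` is the pair
`(x, t_i)`.  `r_i(x_j)` is recorded as `Op.read t_i x t_j`.
-/

namespace MVCC

/-- Operations of multiversion schedules. `read t x w` is `r_t(x_w)`
(transaction `t` reads the version of item `x` written by `w`);
`write t x` is `w_t(x_t)`; `commit t` is `c_t`; `abort t` is `a_t`. -/
inductive Op (Tx : Type*) (Item : Type*) where
  | read  (t : Tx) (x : Item) (w : Tx)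
  | write (t : Tx) (x : Item)
  | commit (t : Tx)
  | abort (t : Tx)

/-- The transaction an operation belongs to. -/
def Op.owner {Tx Item : Type*} : Op Tx Item → Tx
  | .read t _ _ => t
  | .write t _ => t
  | .commit t => t
  | .abort t => t

/-- A multiversion schedule: a set `trans` of transactions, a set `ops` of
operations (each belonging to a transaction of the schedule), and the
total operation order `<_S` (as the relation `lt`). -/
structure Schedule (Tx : Type*) (Item : Type*) where
  trans : Set Tx
  ops : Set (Op Tx Item)
  lt : Op Tx Item → Op Tx Item → Prop
  owners : ∀ p ∈ ops, Op.owner p ∈ trans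

namespace Schedule

variable {Tx Item : Type*} (S : Schedule Tx Item)

/-- `w_t(x_t) ∈ S` : the version `x_t` is written in `S`. -/
def writes (t : Tx) (x : Item) : Prop := Op.write t x ∈ S.ops

/-- `c_t ∈ S`. -/
def committed (t : Tx) : Prop := Op.commit t ∈ S.ops

/-- `a_t ∈ S`. -/
def aborted (t : Tx) : Prop := Op.abort t ∈ S.ops

/-- `t` reads the version of `x` written by the (distinct) transaction `w`,
i.e. the version `x_w ∈ rs_t`. -/
def readsFrom (t : Tx) (x : Item) (w : Tx) : Prop :=
  t ≠ w ∧ S.writes w x ∧ Op.read t x w ∈ S.ops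

/-- `p` is an operation of transaction `t` in `S` (`p ∈ t`). -/
def opOf (p : Op Tx Item) (t : Tx) : Prop := p ∈ S.ops ∧ Op.owner p = t

/-- `t` is a running transaction of `S`: `t ∈ trans(S)` and `c_t, a_t ∉ S`. -/
def running (t : Tx) : Prop := t ∈ S.trans ∧ ¬ S.committed t ∧ ¬ S.aborted t

/-- `S` is recoverable: for all distinct `t_i, t_j ∈ trans(S)`, if `t_j` reads
a version written by `t_i` and `c_j ∈ S`, then `c_i ∈ S` and `c_i <_S c_j`. -/
def Recoverable : Prop :=
  ∀ ti tj : Tx, ti ∈ S.trans → tj ∈ S.trans → ti ≠ tj →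
    (∃ x : Item, S.readsFrom tj x ti) → S.committed tj →
      S.committed ti ∧ S.lt (Op.commit ti) (Op.commit tj)

/-- `S ∪ {c_j}` : append the commit operation `c_j` at the end of `<_S`. -/
def addCommit (j : Tx) : Schedule Tx Item where
  trans := insert j S.trans
  ops := insert (Op.commit j) S.ops
  lt := fun p q => S.lt p q ∨ (p ∈ S.ops ∧ q = Op.commit j)
  owners := by
    intro p hp
    rcases hp with h | h
    · subst h; exact Set.mem_insert _ _
    · exact Set.mem_insert_of_mem _ (S.owners p h)

end Schedule

/-- A version order `≪` for a schedule `S`: for each data item `x`, an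
irreflexive (strict) total order on the versions of `x` written in `S`;
`lt x i k` means `x_i <_v x_k`. -/
structure VersionOrder {Tx Item : Type*} (S : Schedule Tx Item) where
  lt : Item → Tx → Tx → Prop
  irrefl : ∀ x i, ¬ lt x i i
  trans : ∀ x i j k, lt x i j → lt x j k → lt x i k
  total : ∀ x i j, S.writes i x → S.writes j x → i ≠ j → lt x i j ∨ lt x j i

variable {Tx Item : Type*}

/-- The edge `t_a →(wr) t_b` of `MVSG(S, ≪)`: the committed transaction `t_b`
reads some version written by the committed transaction `t_a`. -/
def wrEdge (S : Schedule Tx Item) (a b : Tx) : Prop :=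
  S.committed a ∧ S.committed b ∧ ∃ x : Item, S.readsFrom b x a

/-- The edge `t_a →(rw) t_b` of `MVSG(S, ≪)` (anti-dependency): `t_a` reads a
version `x_j` and the committed `t_b` writes `x_b` with `x_j <_v x_b`. -/
def rwEdge (S : Schedule Tx Item) (vlt : Item → Tx → Tx → Prop) (a b : Tx) : Prop :=
  a ≠ b ∧ S.committed a ∧ S.committed b ∧
    ∃ (x : Item) (j : Tx), S.committed j ∧ S.readsFrom a x j ∧
      S.writes b x ∧ vlt x j b

/-- The edge `t_a →(ww) t_b` of `MVSG(S, ≪)`: `t_a` writes `x_a`, some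
committed `t_i` (distinct from `t_a`) reads the version `x_b` written
by `t_b`, and `x_a <_v x_b`. -/
def wwEdge (S : Schedule Tx Item) (vlt : Item → Tx → Tx → Prop) (a b : Tx) : Prop :=
  a ≠ b ∧ S.committed a ∧ S.committed b ∧
    ∃ (x : Item) (i : Tx), S.committed i ∧ S.readsFrom i x b ∧ i ≠ a ∧
      S.writes a x ∧ vlt x a b

/-- The edge relation of `MVSG(S, ≪)` (nodes are the committed
transactions `trans(CP(S))`). -/
def mvsgEdge (S : Schedule Tx Item) (vlt : Item → Tx → Tx → Prop) (a b : Tx) : Prop :=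
  wrEdge S a b ∨ rwEdge S vlt a b ∨ wwEdge S vlt a b

/-- A relation (graph) is acyclic: no nonempty directed path from a node
to itself. -/
def Acyclic (r : Tx → Tx → Prop) : Prop := ∀ t : Tx, ¬ Relation.TransGen r t t

/-- `RN(t)`: the set of transactions reachable from `t` by a nonempty
directed path. -/
def RN (r : Tx → Tx → Prop) (t : Tx) : Set Tx := {u | Relation.TransGen r t u}

/-- `overwriters_j` : transactions `t_k` with the edge `t_j →(rw) t_k`. -/
def overwriters (S : Schedule Tx Item) (vlt : Item → Tx → Tx → Prop) (tj : Tx) : Set Tx :=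
  {tk | rwEdge S vlt tj tk}

/-- `successors_j` : transactions `t_k` with the edge `t_j →(ww) t_k`. -/
def successors (S : Schedule Tx Item) (vlt : Item → Tx → Tx → Prop) (tj : Tx) : Set Tx :=
  {tk | wwEdge S vlt tj tk}

/-- `M` is a (strict) total order on the set `s`. -/
def IsLinearOrderOn (M : Tx → Tx → Prop) (s : Set Tx) : Prop :=
  (∀ a ∈ s, ¬ M a a) ∧
  (∀ a ∈ s, ∀ b ∈ s, ∀ c ∈ s, M a b → M b c → M a c) ∧
  (∀ a ∈ s, ∀ b ∈ s, a ≠ b → (M a b ∨ M b a))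

/-- `M` topologically sorts `MVSG(S, ≪)`: every edge `t → t'` satisfies `t <_M t'`. -/
def TopoSorts (S : Schedule Tx Item) (vlt : Item → Tx → Tx → Prop)
    (M : Tx → Tx → Prop) : Prop :=
  ∀ a b : Tx, mvsgEdge S vlt a b → M a b

/-- `M` is compatible with the wall-clock precedence order: for committed
`t_i ≠ t_k`, if every operation of `t_i` precedes every operation of `t_k`
in `<_S`, then `t_i <_M t_k`. -/
def RespectsPrecedence (S : Schedule Tx Item) (M : Tx → Tx → Prop) : Prop :=
  ∀ ti tk : Tx, S.committed ti → S.committed tk → ti ≠ tk →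
    (∀ p q : Op Tx Item, S.opOf p ti → S.opOf q tk → S.lt p q) → M ti tk

/-- `S` is strictly serializable: there is a version order `≪` with
`MVSG(S, ≪)` acyclic and a total order `M` on `trans(CP(S))` that
topologically sorts `MVSG(S, ≪)` and is compatible with the wall-clock
precedence order of transactions. -/
def StrictlySerializable (S : Schedule Tx Item) : Prop :=
  ∃ (V : VersionOrder S) (M : Tx → Tx → Prop),
    Acyclic (mvsgEdge S V.lt) ∧
    IsLinearOrderOn M {t : Tx | S.committed t} ∧
    TopoSorts S V.lt M ∧
    RespectsPrecedence S M

/-- NV-Rule: every version `x_j ∈ ws_j` has some version `x_k` of the same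
item with `x_j <_v' x_k`. -/
def NV_Rule (S : Schedule Tx Item) (V' : VersionOrder S) (tj : Tx) : Prop :=
  ∀ x : Item, S.writes tj x → ∃ k : Tx, S.writes k x ∧ V'.lt x tj k

/-- PV-Rule: on versions distinct from the versions written by `t_j`,
`≪'` agrees with `≪`. -/
def PV_Rule (S : Schedule Tx Item) (V V' : VersionOrder S) (tj : Tx) : Prop :=
  ∀ (x : Item) (i k : Tx), S.writes i x → S.writes k x →
    i ≠ tj → k ≠ tj → V.lt x i k → V'.lt x i k

/-- SR-Rule: `t_j ∉ RN(t_j)` in `MVSG(S ∪ {c_j}, ≪')`. -/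
def SR_Rule (S : Schedule Tx Item) (V' : VersionOrder S) (tj : Tx) : Prop :=
  tj ∉ RN (mvsgEdge (S.addCommit tj) V'.lt) tj

/-- ST-Rule: every `t_k ∈ RN(t_j)` (in `MVSG(S ∪ {c_j}, ≪')`) has some
operation `p_j ∈ t_j` with `p_j <_S c_k`. -/
def ST_Rule (S : Schedule Tx Item) (V' : VersionOrder S) (tj : Tx) : Prop :=
  ∀ tk : Tx, tk ∈ RN (mvsgEdge (S.addCommit tj) V'.lt) tj →
    ∃ p : Op Tx Item, S.opOf p tj ∧ S.lt p (Op.commit tk)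

/-- RC-Rule: every version `x_i ∈ rs_j` has `c_i ∈ S`. -/
def RC_Rule (S : Schedule Tx Item) (tj : Tx) : Prop :=
  ∀ (x : Item) (ti : Tx), S.readsFrom tj x ti → S.committed ti

/-- The version order `≪'` satisfies NWR for the triple `(S, ≪, t_j)`. -/
def SatisfiesNWR (S : Schedule Tx Item) (V V' : VersionOrder S) (tj : Tx) : Prop :=
  NV_Rule S V' tj ∧ PV_Rule S V V' tj ∧ SR_Rule S V' tj ∧
    ST_Rule S V' tj ∧ RC_Rule S tj

end MVCC

/-! A `wr` edge `t_j → t_k` of `MVSG(S ∪ {c_j}, ≪')` needs a committed reader `t_k ≠ t_j` of a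
version written by `t_j`. Appending `c_j` changes neither reads nor writes and commits only `t_j`,
so `t_k` already reads from `t_j` and commits in `S`; recoverability of `S` would then force
`c_j ∈ S`, contradicting that `t_j` is running. Hence every edge out of `t_j` is an `rw` or a `ww`
edge, and in particular the first edge of any path starting at `t_j`. -/

namespace MVCC

namespace Schedule

variable {Tx Item : Type*} (S : Schedule Tx Item) (j : Tx)

theorem addCommit_readsFrom_iff {t w : Tx} {x : Item} :
    (S.addCommit j).readsFrom t x w ↔ S.readsFrom t x w := by
  simp [readsFrom, writes, addCommit]

theorem addCommit_committed_iff {t : Tx} : (S.addCommit j).committed t ↔ t = j ∨ S.committed t := by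
  simp [committed, addCommit]

variable {S j}

theorem Recoverable.not_wrEdge_addCommit (hrec : S.Recoverable) (hj : j ∈ S.trans)
    (hnc : ¬ S.committed j) (tk : Tx) : ¬ wrEdge (S.addCommit j) j tk := by
  rintro ⟨-, hck, x, hread⟩
  rw [addCommit_readsFrom_iff] at hread
  have hkj : tk ≠ j := hread.1
  have hckS : S.committed tk := ((S.addCommit_committed_iff j).1 hck).resolve_left hkj
  have hk : tk ∈ S.trans := S.owners _ hread.2.2
  exact hnc (hrec j tk hj hk hkj.symm ⟨x, hread⟩ hckS).1

end Schedule

theorem mem_overwriters_union_successors_of_mvsgEdge {Tx Item : Type*} {S : Schedule Tx Item}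
    {vlt : Item → Tx → Tx → Prop} {a b : Tx} (hwr : ∀ c, ¬ wrEdge S a c)
    (hab : mvsgEdge S vlt a b) : b ∈ overwriters S vlt a ∪ successors S vlt a := by
  rcases hab with h | h | h
  · exact absurd h (hwr b)
  · exact Or.inl h
  · exact Or.inr h

theorem reachable_transactions_general {Tx Item : Type*} (S : Schedule Tx Item) (tj : Tx)
    (htj : tj ∈ S.trans) (hnc : ¬ S.committed tj)
    (hrec : S.Recoverable)
    (V' : VersionOrder S) :
    (∀ tk : Tx, ¬ wrEdge (S.addCommit tj) tj tk) ∧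
    (∀ tk : Tx, mvsgEdge (S.addCommit tj) V'.lt tj tk →
      tk ∈ overwriters (S.addCommit tj) V'.lt tj ∪
           successors (S.addCommit tj) V'.lt tj) ∧
    (∀ tm ∈ RN (mvsgEdge (S.addCommit tj) V'.lt) tj,
      ∃ tk ∈ overwriters (S.addCommit tj) V'.lt tj ∪
             successors (S.addCommit tj) V'.lt tj,
        Relation.ReflTransGen (mvsgEdge (S.addCommit tj) V'.lt) tk tm) := by
  have hNoWr := hrec.not_wrEdge_addCommit htj hnc
  refine ⟨hNoWr, fun tk => mem_overwriters_union_successors_of_mvsgEdge hNoWr, ?_⟩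
  intro tm hm
  obtain ⟨tk, hedge, hpath⟩ := Relation.TransGen.head'_iff.mp hm
  exact ⟨tk, mem_overwriters_union_successors_of_mvsgEdge hNoWr hedge, hpath⟩

/-- **Theorem 2 (Reachable transactions).**  Let `S` be a recoverable
schedule, `t_j ∈ trans(S)` a running transaction (`c_j, a_j ∉ S`), and `≪'`
any version order for `S` such that RC-Rule holds.  Then in
`MVSG(S ∪ {c_j}, ≪')` there is no edge `t_j →(wr) t_k`; consequently, every
edge leaving `t_j` goes into `overwriters_j ∪ successors_j`, so every
nonempty directed path starting at `t_j` begins with an edge into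
`overwriters_j ∪ successors_j`; hence every transaction of `RN(t_j)` is
reached by a path whose first edge goes into
`overwriters_j ∪ successors_j`. -/
theorem reachable_transactions {Tx Item : Type*} (S : Schedule Tx Item) (tj : Tx)
    (htj : tj ∈ S.trans) (hnc : ¬ S.committed tj) (hna : ¬ S.aborted tj)
    (hrec : S.Recoverable)
    (V' : VersionOrder S)
    (hRC : RC_Rule S tj) :
    (∀ tk : Tx, ¬ wrEdge (S.addCommit tj) tj tk) ∧
    (∀ tk : Tx, mvsgEdge (S.addCommit tj) V'.lt tj tk →
      tk ∈ overwriters (S.addCommit tj) V'.lt tj ∪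
           successors (S.addCommit tj) V'.lt tj) ∧
    (∀ tm ∈ RN (mvsgEdge (S.addCommit tj) V'.lt) tj,
      ∃ tk ∈ overwriters (S.addCommit tj) V'.lt tj ∪
             successors (S.addCommit tj) V'.lt tj,
        Relation.ReflTransGen (mvsgEdge (S.addCommit tj) V'.lt) tk tm) :=
  reachable_transactions_general S tj htj hnc hrec V'

end MVCC
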